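/- Let R > 0, let {E_h} be a sequence in 𝒰_R ⊆ ℝⁿ, and let E ⊆ ℝⁿ be a compact set such that E_h →K E in the sense of Kuratowski. Then E ∈ 𝒰_R and ∂E_h →K ∂E in the sense of Kuratowski. -/

import Mathlib

open Set Metric MeasureTheory Filter Topology ENNReal NNReal

noncomputable section

abbrev En (n : ℕ) := EuclideanSpace ℝ (Fin n)

def sphereCond (n : ℕ) (R : ℝ) (E : Set (En n)) : Prop :=
  ∀ p ∈ frontier E, ∃ p' p'' : En n, dist p p' = R ∧ dist p p'' = R ∧
    ball p' R ⊆ E ∧ ball p'' R ∩ E = ∅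

def UR (n : ℕ) (R : ℝ) : Set (Set (En n)) :=
  {E | IsClosed E ∧ Bornology.IsBounded E ∧ sphereCond n R E}

def KConv {X : Type*} [MetricSpace X] (F : ℕ → Set X) (F₀ : Set X) : Prop :=
  (∀ (p : X) (φ : ℕ → ℕ) (x : ℕ → X), StrictMono φ → (∀ k, x k ∈ F (φ k)) →
    Tendsto x atTop (𝓝 p) → p ∈ F₀) ∧
  (∀ p ∈ F₀, ∃ x : ℕ → X, (∀ h, x h ∈ F h) ∧ Tendsto x atTop (𝓝 p))

def L1Conv {n : ℕ} (F : ℕ → Set (En n)) (E : Set (En n)) : Prop :=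
  Tendsto (fun h => ∫ x, |(F h).indicator (fun _ => (1:ℝ)) x - E.indicator (fun _ => (1:ℝ)) x|)
    atTop (𝓝 0)

/-!
Near a point `p ∈ ∂E` there are points of `E`, approximated by points of `E_h`, and points
outside `E`, which eventually lie outside `E_h`; the segment between them, inside a small ball
around `p`, crosses `∂E_h`. So every point of `∂E` is a limit of points of `∂E_h`. Conversely, at
a limit `p` of points of `∂E_h` the exterior balls of radius `R` subconverge to a ball of radius
`R` that misses `E` and has `p` on its boundary, so `p ∉ int E`. Finally, at `p ∈ ∂E` the
interior and exterior balls at approximating points of `∂E_h` subconverge to an interior and an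
exterior ball of `E` at `p`.
-/

lemma IsPreconnected.inter_frontier_nonempty {X : Type*} [TopologicalSpace X] {s t : Set X}
    (hs : IsPreconnected s) (hst : (s ∩ t).Nonempty) (hsdt : (s \ t).Nonempty) :
    (s ∩ frontier t).Nonempty := by
  have := isPreconnected_iff_preconnectedSpace.1 hs
  obtain ⟨x, hx⟩ := hst
  obtain ⟨y, hy⟩ := hsdt
  obtain ⟨z, hz⟩ := (nonempty_frontier_iff (s := ((↑) : s → X) ⁻¹' t)).2
    ⟨⟨⟨x, hx.1⟩, hx.2⟩, fun h => hy.2 (show (⟨y, hy.1⟩ : s) ∈ ((↑) : s → X) ⁻¹' t from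
      h ▸ mem_univ _)⟩
  exact ⟨z, z.2, continuous_subtype_val.frontier_preimage_subset t hz⟩

lemma exists_seq_tendsto_of_eventually_dist_lt {X : Type*} [PseudoMetricSpace X]
    {F : ℕ → Set X} {p : X} (hF : ∀ h, (F h).Nonempty)
    (hp : ∀ ε > 0, ∀ᶠ h in atTop, ∃ y ∈ F h, dist y p < ε) :
    ∃ y : ℕ → X, (∀ h, y h ∈ F h) ∧ Tendsto y atTop (𝓝 p) := by
  have hdist : Tendsto (fun h => infDist p (F h)) atTop (𝓝 0) := by
    refine Metric.tendsto_nhds.2 fun ε hε => ?_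
    filter_upwards [hp ε hε] with h ⟨y, hyF, hyp⟩
    rw [Real.dist_0_eq_abs, abs_of_nonneg infDist_nonneg]
    exact (infDist_le_dist_of_mem hyF).trans_lt (dist_comm p y ▸ hyp)
  have hnear : ∀ h : ℕ, ∃ y ∈ F h, dist p y < infDist p (F h) + 1 / (h + 1) := fun h =>
    (infDist_lt_iff (hF h)).1 (lt_add_of_pos_right _ Nat.one_div_pos_of_nat)
  choose y hyF hy using hnear
  refine ⟨y, hyF, tendsto_iff_dist_tendsto_zero.2 ?_⟩
  refine squeeze_zero (fun _ => dist_nonneg) (fun h => (dist_comm (y h) p).trans_le (hy h).le) ?_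
  simpa using hdist.add tendsto_one_div_add_atTop_nhds_zero_nat

lemma exists_subseq_tendsto_of_dist_eq {X : Type*} [PseudoMetricSpace X] [ProperSpace X]
    {x c : ℕ → X} {p : X} {R : ℝ} (hx : Tendsto x atTop (𝓝 p)) (hc : ∀ k, dist (x k) (c k) = R) :
    ∃ b, ∃ ψ : ℕ → ℕ, StrictMono ψ ∧ Tendsto (c ∘ ψ) atTop (𝓝 b) ∧ dist p b = R := by
  obtain ⟨b, -, ψ, hψ, hcb⟩ :=
    tendsto_subseq_of_bounded ((isBounded_range_of_tendsto x hx).cthickening (δ := R))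
      fun k => mem_cthickening_of_dist_le (c k) (x k) R _ (mem_range_self k)
        (by rw [dist_comm, hc k])
  refine ⟨b, ψ, hψ, hcb, tendsto_nhds_unique ((hx.comp hψ.tendsto_atTop).dist hcb) ?_⟩
  exact tendsto_const_nhds.congr fun k => (hc (ψ k)).symm

namespace KConv

section MetricSpace

variable {X : Type*} [MetricSpace X] {F : ℕ → Set X} {F₀ : Set X}

lemma mem_of_frequently_mem (hK : KConv F F₀) {x : X} (hx : ∃ᶠ h in atTop, x ∈ F h) : x ∈ F₀ := by
  obtain ⟨φ, hφ, hxF⟩ := extraction_of_frequently_atTop hx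
  exact hK.1 x φ (fun _ => x) hφ hxF tendsto_const_nhds

lemma ball_subset_of_tendsto (hK : KConv F F₀) {R : ℝ} {φ : ℕ → ℕ} (hφ : StrictMono φ)
    {c : ℕ → X} {a : X} (hc : Tendsto c atTop (𝓝 a)) (hball : ∀ k, ball (c k) R ⊆ F (φ k)) :
    ball a R ⊆ F₀ := by
  intro x hx
  have hnear : ∀ᶠ k in atTop, dist x (c k) < R :=
    (tendsto_const_nhds.dist hc).eventually_lt_const (mem_ball.1 hx)
  refine hK.mem_of_frequently_mem (hφ.tendsto_atTop.frequently ?_)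
  exact (hnear.mono fun k hk => hball k (mem_ball.2 hk)).frequently

lemma ball_inter_eq_empty_of_tendsto (hK : KConv F F₀) {R : ℝ} {φ : ℕ → ℕ} (hφ : StrictMono φ)
    {c : ℕ → X} {b : X} (hc : Tendsto c atTop (𝓝 b)) (hball : ∀ k, ball (c k) R ∩ F (φ k) = ∅) :
    ball b R ∩ F₀ = ∅ := by
  refine eq_empty_iff_forall_notMem.2 fun x ⟨hxb, hxF₀⟩ => ?_
  obtain ⟨w, hwF, hw⟩ := hK.2 x hxF₀
  have hnear : ∀ᶠ k in atTop, dist (w (φ k)) (c k) < R :=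
    ((hw.comp hφ.tendsto_atTop).dist hc).eventually_lt_const (mem_ball.1 hxb)
  obtain ⟨k, hk⟩ := hnear.exists
  exact (hball k).subset ⟨mem_ball.2 hk, hwF (φ k)⟩

end MetricSpace

variable {X : Type*} [NormedAddCommGroup X] [NormedSpace ℝ X] {F : ℕ → Set X} {E : Set X}

lemma eventually_exists_mem_frontier_dist_lt (hK : KConv F E) {p : X} (hpE : p ∈ E)
    (hpc : p ∈ closure Eᶜ) {ε : ℝ} (hε : 0 < ε) :
    ∀ᶠ h in atTop, ∃ y ∈ frontier (F h), dist y p < ε := by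
  obtain ⟨q, hqE, hpq⟩ := Metric.mem_closure_iff.1 hpc ε hε
  obtain ⟨x, hxF, hx⟩ := hK.2 p hpE
  have hqF : ∀ᶠ h in atTop, q ∉ F h :=
    not_frequently.1 fun hq => hqE (hK.mem_of_frequently_mem hq)
  filter_upwards [hqF, hx (ball_mem_nhds p hε)] with h hqFh hxh
  obtain ⟨y, hyp, hyF⟩ := (convex_ball p ε).isPreconnected.inter_frontier_nonempty
    ⟨x h, hxh, hxF h⟩ ⟨q, mem_ball'.2 hpq, hqFh⟩
  exact ⟨y, hyF, hyp⟩

lemma exists_tendsto_frontier (hK : KConv F E) (hbdd : ∀ h, Bornology.IsBounded (F h))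
    (hE : IsClosed E) {p : X} (hp : p ∈ frontier E) :
    ∃ y : ℕ → X, (∀ h, y h ∈ frontier (F h)) ∧ Tendsto y atTop (𝓝 p) := by
  have hpE : p ∈ E := hE.frontier_subset hp
  have : Nontrivial X := by
    obtain ⟨q, hqE⟩ := (ne_univ_iff_exists_notMem E).1 (nonempty_frontier_iff.1 ⟨p, hp⟩).2
    exact nontrivial_of_ne p q (ne_of_mem_of_not_mem hpE hqE)
  obtain ⟨x, hxF, -⟩ := hK.2 p hpE
  have hF : ∀ h, (frontier (F h)).Nonempty := fun h =>
    nonempty_frontier_iff.2 ⟨⟨x h, hxF h⟩, fun hu => NormedSpace.unbounded_univ ℝ X (hu ▸ hbdd h)⟩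
  have hpc : p ∈ closure Eᶜ := frontier_subset_closure (frontier_compl E ▸ hp)
  exact exists_seq_tendsto_of_eventually_dist_lt hF fun ε hε =>
    hK.eventually_exists_mem_frontier_dist_lt hpE hpc hε

variable [ProperSpace X] {R : ℝ}

lemma mem_frontier_of_tendsto (hK : KConv F E) (hcl : ∀ h, IsClosed (F h)) (hR : 0 < R)
    (hext : ∀ h, ∀ x ∈ frontier (F h), ∃ c, dist x c = R ∧ ball c R ∩ F h = ∅)
    (hE : IsClosed E) {p : X} {φ : ℕ → ℕ} {x : ℕ → X} (hφ : StrictMono φ)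
    (hx : ∀ k, x k ∈ frontier (F (φ k))) (hxp : Tendsto x atTop (𝓝 p)) : p ∈ frontier E := by
  choose c hxc hc using fun k => hext (φ k) (x k) (hx k)
  obtain ⟨b, ψ, hψ, hcb, hpb⟩ := exists_subseq_tendsto_of_dist_eq hxp hxc
  have hbE : ball b R ⊆ Eᶜ := subset_compl_iff_disjoint_right.2 <| disjoint_iff_inter_eq_empty.2 <|
    hK.ball_inter_eq_empty_of_tendsto (hφ.comp hψ) hcb fun k => hc (ψ k)
  have hpc : p ∈ closure Eᶜ := closure_mono hbE <| by
    rw [closure_ball b hR.ne']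
    exact mem_closedBall.2 hpb.le
  rw [hE.frontier_eq]
  refine ⟨hK.1 p φ x hφ (fun k => (hcl _).frontier_subset (hx k)) hxp, ?_⟩
  rwa [closure_compl] at hpc

lemma frontier (hK : KConv F E) (hcl : ∀ h, IsClosed (F h))
    (hbdd : ∀ h, Bornology.IsBounded (F h)) (hR : 0 < R)
    (hext : ∀ h, ∀ x ∈ frontier (F h), ∃ c, dist x c = R ∧ ball c R ∩ F h = ∅)
    (hE : IsClosed E) : KConv (fun h => frontier (F h)) (frontier E) :=
  ⟨fun _ _ _ hφ hx hxp => hK.mem_frontier_of_tendsto hcl hR hext hE hφ hx hxp,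
    fun _ hp => hK.exists_tendsto_frontier hbdd hE hp⟩

end KConv

lemma sphereCond_of_kConv {n : ℕ} {R : ℝ} {F : ℕ → Set (En n)} {E : Set (En n)}
    (hF : ∀ h, sphereCond n R (F h)) (hK : KConv F E)
    (hfr : KConv (fun h => frontier (F h)) (frontier E)) : sphereCond n R E := by
  intro p hp
  obtain ⟨y, hyF, hyp⟩ := hfr.2 p hp
  choose c₁ c₂ hc₁ hc₂ hB₁ hB₂ using fun h => hF h (y h) (hyF h)
  obtain ⟨a, ψ₁, hψ₁, ha, hpa⟩ := exists_subseq_tendsto_of_dist_eq hyp hc₁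
  obtain ⟨b, ψ₂, hψ₂, hb, hpb⟩ := exists_subseq_tendsto_of_dist_eq
    (hyp.comp hψ₁.tendsto_atTop) fun k => hc₂ (ψ₁ k)
  exact ⟨a, b, hpa, hpb, hK.ball_subset_of_tendsto hψ₁ ha fun k => hB₁ (ψ₁ k),
    hK.ball_inter_eq_empty_of_tendsto (hψ₁.comp hψ₂) hb fun k => hB₂ (ψ₁ (ψ₂ k))⟩

theorem kuratowski_limit_in_UR_general (n : ℕ) (R : ℝ) (hR : 0 < R)
    (Eh : ℕ → Set (En n)) (hEh : ∀ h, Eh h ∈ UR n R)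
    (E : Set (En n)) (hE : IsCompact E) (hK : KConv Eh E) :
    E ∈ UR n R ∧ KConv (fun h => frontier (Eh h)) (frontier E) := by
  have hext : ∀ h, ∀ x ∈ frontier (Eh h), ∃ c, dist x c = R ∧ ball c R ∩ Eh h = ∅ := by
    intro h x hx
    obtain ⟨-, c, -, hxc, -, hc⟩ := (hEh h).2.2 x hx
    exact ⟨c, hxc, hc⟩
  have hfr : KConv (fun h => frontier (Eh h)) (frontier E) :=
    hK.frontier (fun h => (hEh h).1) (fun h => (hEh h).2.1) hR hext hE.isClosed
  exact ⟨⟨hE.isClosed, hE.isBounded, sphereCond_of_kConv (fun h => (hEh h).2.2) hK hfr⟩, hfr⟩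

theorem kuratowski_limit_in_UR (n : ℕ) (hn : 2 ≤ n) (R : ℝ) (hR : 0 < R)
    (Eh : ℕ → Set (En n)) (hEh : ∀ h, Eh h ∈ UR n R)
    (E : Set (En n)) (hE : IsCompact E) (hK : KConv Eh E) :
    E ∈ UR n R ∧ KConv (fun h => frontier (Eh h)) (frontier E) :=
  kuratowski_limit_in_UR_general n R hR Eh hEh E hE hK
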